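/- arXiv:2206.01456 — 4 statements merged into one kernel-verified Lean document; each statement's English description precedes it below -/
import Mathlib

section
/- If G is a finite transitive permutation group on Ω in which the stabilizer of any two distinct points has the same fixed cardinality c > 1 independent of the pair, and the pointwise stabilizer of any three points not pairwise sharing the same two-point stabilizer is trivial, then all irredundant bases of G have the same size; that is, G is an IBIS group. -/
/-- The pointwise stabilizer of a list of points. -/
def ptStab (G : Type*) {Ω : Type*} [Group G] [MulAction G Ω] (w : List Ω) : Subgroup G :=
  ⨅ x ∈ w, MulAction.stabilizer G x

/-- `w` is a base: its pointwise stabilizer is trivial. -/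
def IsBaseList (G : Type*) {Ω : Type*} [Group G] [MulAction G Ω] (w : List Ω) : Prop :=
  ptStab G w = ⊥

/-- `w` is an irredundant base: a base in which no point is fixed by the stabilizer of its
predecessors. -/
def IsIrredundantBase (G : Type*) {Ω : Type*} [Group G] [MulAction G Ω] (w : List Ω) : Prop :=
  IsBaseList G w ∧
    ∀ i (h : i < w.length), ¬ ptStab G (w.take i) ≤ MulAction.stabilizer G (w.get ⟨i, h⟩)

/-- `G` is an IBIS group on `Ω`: all irredundant bases have the same cardinality. -/
def IsIBIS (G Ω : Type*) [Group G] [MulAction G Ω] : Prop :=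
  ∀ w₁ w₂ : List Ω, IsIrredundantBase G w₁ → IsIrredundantBase G w₂ →
    w₁.length = w₂.length

lemma ptStab_nil (G : Type*) {Ω : Type*} [Group G] [MulAction G Ω] :
    ptStab G ([] : List Ω) = ⊤ := by simp [ptStab]

lemma ptStab_cons (G : Type*) {Ω : Type*} [Group G] [MulAction G Ω] (a : Ω) (w : List Ω) :
    ptStab G (a :: w) = MulAction.stabilizer G a ⊓ ptStab G w := by
  simp [ptStab, List.mem_cons, iInf_or, iInf_inf_eq]

/-- If `G` is a finite transitive group on `Ω` in which every two-point stabilizer has the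
same cardinality `c > 1`, and the pointwise stabilizer of any three points that do not
pairwise share the same two-point stabilizer is trivial, then `G` is IBIS. -/
theorem stmt_1 (G Ω : Type*) [Group G] [Finite G] [MulAction G Ω]
    [FaithfulSMul G Ω] [MulAction.IsPretransitive G Ω] (c : ℕ) (hc : 1 < c)
    (hpair : ∀ α β : Ω, α ≠ β →
      Nat.card ↥(MulAction.stabilizer G α ⊓ MulAction.stabilizer G β) = c)
    (htriple : ∀ α β γ : Ω, α ≠ β → β ≠ γ → α ≠ γ →
      ¬ (MulAction.stabilizer G α ⊓ MulAction.stabilizer G β =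
            MulAction.stabilizer G α ⊓ MulAction.stabilizer G γ ∧
         MulAction.stabilizer G α ⊓ MulAction.stabilizer G γ =
            MulAction.stabilizer G β ⊓ MulAction.stabilizer G γ) →
      MulAction.stabilizer G α ⊓ MulAction.stabilizer G β ⊓ MulAction.stabilizer G γ = ⊥) :
    IsIBIS G Ω := by
  by_cases hΩ : ∃ α β : Ω, α ≠ β
  · -- nontrivial Ω: every irredundant base has length 3
    obtain ⟨α₀, β₀, hab₀⟩ := hΩ
    have hbotpair : ∀ α β : Ω, α ≠ β →
        MulAction.stabilizer G α ⊓ MulAction.stabilizer G β ≠ ⊥ := by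
      intro α β hne h
      have := hpair α β hne
      rw [h] at this
      simp [Subgroup.card_bot] at this
      omega
    have _ : Nontrivial Ω := ⟨α₀, β₀, hab₀⟩
    have hstab : ∀ γ : Ω, MulAction.stabilizer G γ ≠ ⊥ := by
      intro γ h
      obtain ⟨δ, hδ⟩ := exists_ne γ
      exact hbotpair γ δ (Ne.symm hδ) (by rw [h]; simp)
    have hGnt : (⊤ : Subgroup G) ≠ ⊥ := fun h =>
      hbotpair α₀ β₀ hab₀ (le_bot_iff.mp (h ▸ le_top))
    have key : ∀ w : List Ω, IsIrredundantBase G w → w.length = 3 := by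
      rintro w ⟨hbase, hirr⟩
      match w with
      | [] =>
        exact absurd (by simpa [IsBaseList, ptStab_nil] using hbase) hGnt
      | [a] =>
        exact absurd (by simpa [IsBaseList, ptStab_cons, ptStab_nil] using hbase) (hstab a)
      | [a, b] =>
        have h1 := hirr 1 (by simp)
        simp [ptStab_cons, ptStab_nil] at h1
        have hab : a ≠ b := fun h => h1 (by rw [h])
        exact absurd (by simpa [IsBaseList, ptStab_cons, ptStab_nil] using hbase)
          (hbotpair a b hab)
      | [a, b, c] => rfl
      | a :: b :: c :: d :: w =>
        exfalso
        have h1 := hirr 1 (by simp only [List.length_cons]; omega)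
        have h2 := hirr 2 (by simp only [List.length_cons]; omega)
        have h3 := hirr 3 (by simp only [List.length_cons]; omega)
        simp [ptStab_cons, ptStab_nil] at h1 h2 h3
        have hab : a ≠ b := fun h => h1 (by rw [h])
        have hac : a ≠ c := fun h => h2 (by rw [h]; exact inf_le_left)
        have hbc : b ≠ c := fun h => h2 (by rw [h]; exact inf_le_right)
        have hbot := htriple a b c hab hbc hac (fun he => h2 (by rw [he.1]; exact inf_le_right))
        apply h3
        rw [show MulAction.stabilizer G a ⊓ (MulAction.stabilizer G b ⊓ MulAction.stabilizer G c)
            = ⊥ by rw [← inf_assoc]; exact hbot]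
        exact bot_le
    intro w₁ w₂ h1 h2
    rw [key w₁ h1, key w₂ h2]
  · -- Ω subsingleton ⇒ G subsingleton ⇒ only the empty list is irredundant
    have hΩ' : ∀ a b : Ω, a = b := by
      intro a b; by_contra h; exact hΩ ⟨a, b, h⟩
    have hG : Subsingleton G :=
      ⟨fun g g' => eq_of_smul_eq_smul (α := Ω) fun a => by rw [hΩ' (g • a) (g' • a)]⟩
    have key : ∀ w : List Ω, IsIrredundantBase G w → w.length = 0 := by
      rintro (_ | ⟨x, t⟩) ⟨hbase, hirr⟩
      · rfl
      · exfalso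
        refine hirr 0 (by simp) ?_
        intro g _
        have : g = 1 := Subsingleton.elim _ _
        simp [this]
    intro w₁ w₂ h1 h2
    rw [key w₁ h1, key w₂ h2]
end

section
/- Let n ≥ 7 and 3 ≤ k < n/2. In the action of Sym(n) on the set of k-element subsets of {1,...,n}, the sequence of subsets α_i := {1,...,k-1, k+i-1} for i = 1,...,n-k, followed by β_j := {j, k, k+1, ..., 2k-2} for j = 1,...,k-2, forms an irredundant base of cardinality n-2. In particular, the pointwise stabilizer of α_1,...,α_{n-k} in Sym(n) equals Sym({1,...,k-1}). -/
open Pointwise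

lemma myImage_eq {n : ℕ} (g : Equiv.Perm (Fin n)) (s : Finset (Fin n))
    (h : ∀ x ∈ s, g x ∈ s) : s.image g = s := by
  apply Finset.eq_of_subset_of_card_le
  · intro y hy
    obtain ⟨x, hx, rfl⟩ := Finset.mem_image.1 hy
    exact h x hx
  · rw [Finset.card_image_of_injective _ g.injective]

lemma mySmul_eq {n : ℕ} (g : Equiv.Perm (Fin n)) (s : Finset (Fin n))
    (h : ∀ x ∈ s, g x ∈ s) : g • s = s := by
  rw [Finset.smul_finset_def]
  simpa [Equiv.Perm.smul_def] using myImage_eq g s h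

lemma mem_ptStab_iff {G Ω : Type*} [Group G] [MulAction G Ω] (w : List Ω) (g : G) :
    g ∈ ptStab G w ↔ ∀ x ∈ w, g • x = x := by
  simp [ptStab, Subgroup.mem_iInf, MulAction.mem_stabilizer_iff]

/-- Let `n ≥ 7` and `3 ≤ k < n/2`.  Writing the points `1,…,n` as `0,…,n-1`, consider in the
action of `Sym(n)` on `k`-subsets the list `A` of the subsets `αᵢ = {1,…,k-1, k+i-1}`
(`i = 1,…,n-k`) followed by the list `B` of the subsets `βⱼ = {j, k, k+1, …, 2k-2}`
(`j = 1,…,k-2`).  Then the pointwise stabilizer of `A` is `Sym({1,…,k-1})` (the permutations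
fixing all points outside `{1,…,k-1}`), and `A ++ B` is an irredundant base of
cardinality `n - 2`. -/
theorem stmt_3 (n k : ℕ) (hn : 7 ≤ n) (hk3 : 3 ≤ k) (hkn : 2 * k < n)
    (A B : List (Finset (Fin n)))
    (hA : A = (List.finRange (n - k)).map (fun i =>
      insert (⟨k - 1 + i.1, by have := i.2; omega⟩ : Fin n)
        (Finset.univ.filter (fun x : Fin n => x.1 < k - 1))))
    (hB : B = (List.finRange (k - 2)).map (fun j =>
      insert (⟨j.1, by have := j.2; omega⟩ : Fin n)
        (Finset.univ.filter (fun x : Fin n => k - 1 ≤ x.1 ∧ x.1 < 2 * k - 2)))) :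
    (∀ g : Equiv.Perm (Fin n),
        (∀ s ∈ A, g • s = s) ↔ ∀ x : Fin n, k - 1 ≤ x.1 → g x = x) ∧
    IsIrredundantBase (Equiv.Perm (Fin n)) (A ++ B) ∧ (A ++ B).length = n - 2 := by
  set C : Finset (Fin n) := Finset.univ.filter (fun x : Fin n => x.1 < k - 1) with hC
  set D : Finset (Fin n) := Finset.univ.filter
    (fun x : Fin n => k - 1 ≤ x.1 ∧ x.1 < 2 * k - 2) with hD
  set α : Fin (n - k) → Finset (Fin n) :=
    (fun i => insert (⟨k - 1 + i.1, by have := i.2; omega⟩ : Fin n) C) with hα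
  set β : Fin (k - 2) → Finset (Fin n) :=
    (fun j => insert (⟨j.1, by have := j.2; omega⟩ : Fin n) D) with hβ
  have hA' : A = (List.finRange (n - k)).map α := hA
  have hB' : B = (List.finRange (k - 2)).map β := hB
  clear hA hB
  have memC : ∀ x : Fin n, x ∈ C ↔ x.1 < k - 1 := by intro x; simp [hC]
  have memα : ∀ (i : Fin (n - k)) (x : Fin n),
      x ∈ α i ↔ x.1 = k - 1 + i.1 ∨ x.1 < k - 1 := by
    intro i x
    simp [hα, hC, Finset.mem_insert, Fin.ext_iff]
  have memβ : ∀ (j : Fin (k - 2)) (x : Fin n),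
      x ∈ β j ↔ x.1 = j.1 ∨ (k - 1 ≤ x.1 ∧ x.1 < 2 * k - 2) := by
    intro j x
    simp [hβ, hD, Finset.mem_insert, Fin.ext_iff]
  have memA : ∀ s, s ∈ A ↔ ∃ i : Fin (n - k), α i = s := by
    intro s; rw [hA']; simp [List.mem_map]
  have memB : ∀ s, s ∈ B ↔ ∃ j : Fin (k - 2), β j = s := by
    intro s; rw [hB']; simp [List.mem_map]
  -- permutations fixing the high points map C into C
  have mapsC : ∀ g : Equiv.Perm (Fin n), (∀ x : Fin n, k - 1 ≤ x.1 → g x = x) →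
      ∀ x ∈ C, g x ∈ C := by
    intro g hg x hx
    rw [memC] at hx ⊢
    by_contra h
    push_neg at h
    have h2 : g x = x := g.injective (hg (g x) h)
    rw [h2] at h
    omega
  -- direction 1 of the characterization
  have dir1 : ∀ g : Equiv.Perm (Fin n), (∀ i : Fin (n - k), g • α i = α i) →
      ∀ x : Fin n, k - 1 ≤ x.1 → g x = x := by
    intro g hg
    have hgmem : ∀ (i : Fin (n - k)) (x : Fin n), x ∈ α i → g x ∈ α i := by
      intro i x hx
      have h2 := Finset.smul_mem_smul_finset (a := g) hx
      rwa [hg i, Equiv.Perm.smul_def] at h2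
    have hgC : ∀ x ∈ C, g x ∈ C := by
      intro x hx
      have hx' : x.1 < k - 1 := (memC x).1 hx
      have h0 := hgmem ⟨0, by omega⟩ x (by rw [memα]; right; exact hx')
      have h1 := hgmem ⟨1, by omega⟩ x (by rw [memα]; right; exact hx')
      rw [memα] at h0 h1
      rw [memC]
      simp only at h0 h1
      omega
    have himg : C.image g = C := myImage_eq g C hgC
    have hnotC : ∀ x : Fin n, k - 1 ≤ x.1 → ¬ (g x).1 < k - 1 := by
      intro x hx hlt
      have hmem : g x ∈ C := (memC _).2 hlt
      rw [← himg, Finset.mem_image] at hmem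
      obtain ⟨y, hy, hxy⟩ := hmem
      have : y = x := g.injective hxy
      subst this
      rw [memC] at hy
      omega
    have hmid : ∀ x : Fin n, k - 1 ≤ x.1 → x.1 < n - 1 → g x = x := by
      intro x hx hx2
      have hi : x.1 - (k - 1) < n - k := by omega
      have hxm : x ∈ α ⟨x.1 - (k - 1), hi⟩ := by rw [memα]; left; simp; omega
      have := hgmem _ _ hxm
      rw [memα] at this
      simp only at this
      rcases this with h | h
      · exact Fin.ext (by omega)
      · exact absurd h (hnotC x hx)
    intro x hx
    by_cases hx2 : x.1 < n - 1
    · exact hmid x hx hx2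
    · have hx1 : x.1 = n - 1 := by omega
      by_contra hne
      have hne' : (g x).1 ≠ n - 1 := by
        intro h
        exact hne (Fin.ext (by omega))
      rcases lt_or_ge (g x).1 (k - 1) with h | h
      · exact hnotC x hx h
      · have : g (g x) = g x := hmid (g x) h (by omega)
        have := g.injective this
        exact hne this
  -- direction 2
  have dir2 : ∀ g : Equiv.Perm (Fin n), (∀ x : Fin n, k - 1 ≤ x.1 → g x = x) →
      ∀ i : Fin (n - k), g • α i = α i := by
    intro g hg i
    apply mySmul_eq
    intro x hx
    rw [memα] at hx ⊢
    rcases hx with h | h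
    · left; rw [hg x (by omega)]; exact h
    · right
      have := mapsC g hg x ((memC x).2 h)
      exact (memC _).1 this
  have hchar : ∀ g : Equiv.Perm (Fin n),
      (∀ s ∈ A, g • s = s) ↔ ∀ x : Fin n, k - 1 ≤ x.1 → g x = x := by
    intro g
    constructor
    · intro h
      exact dir1 g (fun i => h (α i) ((memA (α i)).2 ⟨i, rfl⟩))
    · intro h s hs
      obtain ⟨i, rfl⟩ := (memA s).1 hs
      exact dir2 g h i
  have hlenA : A.length = n - k := by rw [hA']; simp
  have hlenB : B.length = k - 2 := by rw [hB']; simp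
  have hlen : (A ++ B).length = n - 2 := by
    rw [List.length_append, hlenA, hlenB]; omega
  refine ⟨hchar, ⟨?_, ?_⟩, hlen⟩
  · -- base
    rw [IsBaseList, eq_bot_iff]
    intro g hg
    rw [mem_ptStab_iff] at hg
    have hgA : ∀ s ∈ A, g • s = s := fun s hs => hg s (List.mem_append_left _ hs)
    have hfix : ∀ x : Fin n, k - 1 ≤ x.1 → g x = x := (hchar g).1 hgA
    have hgC := mapsC g hfix
    have hsmall : ∀ x : Fin n, x.1 < k - 2 → g x = x := by
      intro x hx
      set j : Fin (k - 2) := ⟨x.1, hx⟩ with hj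
      have hgβ : g • β j = β j := hg (β j)
        (List.mem_append_right _ ((memB (β j)).2 ⟨j, rfl⟩))
      have hxβ : x ∈ β j := by rw [memβ]; left; rfl
      have h2 := Finset.smul_mem_smul_finset (a := g) hxβ
      rw [hgβ, Equiv.Perm.smul_def] at h2
      rw [memβ] at h2
      have hxC : g x ∈ C := hgC x ((memC x).2 (by omega))
      rw [memC] at hxC
      rcases h2 with h | h
      · exact Fin.ext (by simp [hj] at h ⊢; omega)
      · omega
    rw [Subgroup.mem_bot]
    apply Equiv.ext
    intro x
    show g x = x
    rcases lt_trichotomy x.1 (k - 2) with h | h | h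
    · exact hsmall x h
    · by_contra hne
      have hne' : (g x).1 ≠ k - 2 := fun hh => hne (Fin.ext (by omega))
      have hfixed : g (g x) = g x := by
        rcases lt_or_ge (g x).1 (k - 2) with h2 | h2
        · exact hsmall _ h2
        · exact hfix _ (by omega)
      exact hne (g.injective hfixed)
    · exact hfix x (by omega)
  · -- irredundant
    intro i hi
    rw [hlen] at hi
    have hgetlem : (A ++ B).get ⟨i, by rw [hlen]; exact hi⟩ = (A ++ B)[i]'(by rw [hlen]; exact hi) := rfl
    by_cases hiA : i < n - k
    · -- the i-th element is α ⟨i⟩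
      have hget : (A ++ B).get ⟨i, by rw [hlen]; exact hi⟩ = α ⟨i, hiA⟩ := by
        rw [hgetlem, List.getElem_append_left (by rw [hlenA]; exact hiA),
          List.getElem_of_eq hA', List.getElem_map, List.getElem_finRange]
        rfl
      have htake : (A ++ B).take i = A.take i := by
        rw [List.take_append, hlenA]
        have : i - (n - k) = 0 := by omega
        rw [this, List.take_zero, List.append_nil]
      have hmemtake : ∀ s ∈ (A ++ B).take i, ∃ j : Fin (n - k), j.1 < i ∧ α j = s := by
        intro s hs
        rw [htake, hA', ← List.map_take] at hs
        obtain ⟨j, hj, rfl⟩ := List.mem_map.1 hs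
        rw [List.mem_take_iff_getElem] at hj
        obtain ⟨m, hm, rfl⟩ := hj
        rw [List.getElem_finRange]
        refine ⟨_, ?_, rfl⟩
        simp only [List.length_take, List.length_finRange, lt_min_iff] at hm
        simp [hm.1]
      set g : Equiv.Perm (Fin n) :=
        Equiv.swap (⟨k - 1 + i, by omega⟩ : Fin n) (⟨k + i, by omega⟩ : Fin n) with hgdef
      intro hle
      have hgmem : g ∈ ptStab (Equiv.Perm (Fin n)) ((A ++ B).take i) := by
        rw [mem_ptStab_iff]
        intro s hs
        obtain ⟨j, hj, rfl⟩ := hmemtake s hs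
        apply mySmul_eq
        intro x hx
        have hx' := (memα j x).1 hx
        have hgx : g x = x := by
          apply Equiv.swap_apply_of_ne_of_ne
          · intro hh; rw [Fin.ext_iff] at hh; simp at hh; omega
          · intro hh; rw [Fin.ext_iff] at hh; simp at hh; omega
        rw [hgx]; exact hx
      have := hle hgmem
      rw [MulAction.mem_stabilizer_iff, hget] at this
      have hxm : (⟨k - 1 + i, by omega⟩ : Fin n) ∈ α ⟨i, hiA⟩ := by
        rw [memα]; left; simp
      have h2 := Finset.smul_mem_smul_finset (a := g) hxm
      rw [this, Equiv.Perm.smul_def, hgdef, Equiv.swap_apply_left] at h2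
      rw [memα] at h2
      simp only at h2
      omega
    · -- the i-th element is β ⟨i - (n-k)⟩
      have hj : i - (n - k) < k - 2 := by omega
      have hget : (A ++ B).get ⟨i, by rw [hlen]; exact hi⟩ = β ⟨i - (n - k), hj⟩ := by
        rw [hgetlem, List.getElem_append_right (by rw [hlenA]; omega),
          List.getElem_of_eq hB', List.getElem_map, List.getElem_finRange]
        congr 1
        apply Fin.ext
        simp [hlenA]
      have htake : (A ++ B).take i = A ++ B.take (i - (n - k)) := by
        rw [List.take_append, hlenA,
          List.take_of_length_le (by rw [hlenA]; omega)]
      set j : ℕ := i - (n - k) with hjdef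
      have hmemtake : ∀ s ∈ (A ++ B).take i,
          (∃ m : Fin (n - k), α m = s) ∨ (∃ m : Fin (k - 2), m.1 < j ∧ β m = s) := by
        intro s hs
        rw [htake, List.mem_append] at hs
        rcases hs with hs | hs
        · exact Or.inl ((memA s).1 hs)
        · right
          rw [hB', ← List.map_take] at hs
          obtain ⟨m, hm, rfl⟩ := List.mem_map.1 hs
          rw [List.mem_take_iff_getElem] at hm
          obtain ⟨l, hl, rfl⟩ := hm
          rw [List.getElem_finRange]
          refine ⟨_, ?_, rfl⟩
          simp only [List.length_take, List.length_finRange, lt_min_iff] at hl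
          simp [hl.1]
      set g : Equiv.Perm (Fin n) :=
        Equiv.swap (⟨j, by omega⟩ : Fin n) (⟨j + 1, by omega⟩ : Fin n) with hgdef
      intro hle
      have hgmem : g ∈ ptStab (Equiv.Perm (Fin n)) ((A ++ B).take i) := by
        rw [mem_ptStab_iff]
        intro s hs
        rcases hmemtake s hs with ⟨m, rfl⟩ | ⟨m, hm, rfl⟩
        · apply mySmul_eq
          intro x hx
          rw [memα] at hx ⊢
          rcases hx with h | h
          · have hgx : g x = x := by
              apply Equiv.swap_apply_of_ne_of_ne
              · intro hh; rw [Fin.ext_iff] at hh; simp at hh; omega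
              · intro hh; rw [Fin.ext_iff] at hh; simp at hh; omega
            rw [hgx]; left; exact h
          · right
            rcases eq_or_ne x (⟨j, by omega⟩ : Fin n) with h1 | hne1
            · rw [h1, hgdef, Equiv.swap_apply_left]; show j + 1 < k - 1; omega
            · rcases eq_or_ne x (⟨j + 1, by omega⟩ : Fin n) with h1 | hne2
              · rw [h1, hgdef, Equiv.swap_apply_right]; show j < k - 1; omega
              · rw [hgdef, Equiv.swap_apply_of_ne_of_ne hne1 hne2]; exact h
        · apply mySmul_eq
          intro x hx
          have hx' := (memβ m x).1 hx
          have hgx : g x = x := by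
            apply Equiv.swap_apply_of_ne_of_ne
            · intro hh; rw [Fin.ext_iff] at hh; simp at hh; omega
            · intro hh; rw [Fin.ext_iff] at hh; simp at hh; omega
          rw [hgx]; exact hx
      have := hle hgmem
      rw [MulAction.mem_stabilizer_iff, hget] at this
      have hxm : (⟨j, by omega⟩ : Fin n) ∈ β ⟨j, hj⟩ := by
        rw [memβ]; left; rfl
      have h2 := Finset.smul_mem_smul_finset (a := g) hxm
      rw [this, Equiv.Perm.smul_def, hgdef, Equiv.swap_apply_left] at h2
      rw [memβ] at h2
      simp only at h2
      omega
end

section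
/- Let n ≥ 5. In the action of Sym(n) on 2-element subsets of {1,...,n}, the pointwise stabilizer of the subsets {1,2}, {1,3}, ..., {1, n-2} equals Sym({n-1, n}). Consequently Sym(n) has an irredundant base of cardinality n-2 and Alt(n) has an irredundant base of cardinality n-3 in this action. -/
open Pointwise

namespace Stmt7Aux

lemma mem_ptStab_iff {G Ω : Type*} [Group G] [MulAction G Ω] (w : List Ω) (g : G) :
    g ∈ ptStab G w ↔ ∀ s ∈ w, g • s = s := by
  simp [ptStab, Subgroup.mem_iInf, MulAction.mem_stabilizer_iff]

lemma smul_fix_iff {n : ℕ} (g : Equiv.Perm (Fin n)) (s : Finset (Fin n)) :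
    g • s = s ↔ ∀ x ∈ s, g x ∈ s := by
  constructor
  · intro h x hx
    have h2 : g • x ∈ g • s := Finset.smul_mem_smul_finset hx
    rwa [h, Equiv.Perm.smul_def] at h2
  · intro h
    have hsub : s.image g ⊆ s := Finset.image_subset_iff.2 h
    have heq : s.image g = s := Finset.eq_of_subset_of_card_le hsub
      (by rw [Finset.card_image_of_injective _ g.injective])
    rw [Finset.smul_finset_def]
    simpa [Equiv.Perm.smul_def] using heq

variable {n : ℕ}

lemma fix_pair (g : Equiv.Perm (Fin n)) (a b : Fin n) (ha : g a = a) (hb : g b = b) :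
    g • ({a, b} : Finset (Fin n)) = {a, b} := by
  rw [smul_fix_iff]
  intro x hx
  simp only [Finset.mem_insert, Finset.mem_singleton] at hx ⊢
  rcases hx with rfl | rfl
  · left; exact ha
  · right; exact hb

lemma move_pair (g : Equiv.Perm (Fin n)) (a b : Fin n)
    (h : g b ∉ ({a, b} : Finset (Fin n))) :
    g • ({a, b} : Finset (Fin n)) ≠ {a, b} := by
  intro he
  exact h ((smul_fix_iff g _).1 he b (by simp))

lemma forward (hn : 5 ≤ n) (m : ℕ) (hm2 : 2 ≤ m) (hmn : m ≤ n - 2) (g : Equiv.Perm (Fin n))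
    (h : ∀ (k : ℕ) (_ : 1 ≤ k) (_ : k ≤ m),
      ∀ x ∈ ({⟨0, by omega⟩, ⟨k, by omega⟩} : Finset (Fin n)), g x ∈
        ({⟨0, by omega⟩, ⟨k, by omega⟩} : Finset (Fin n))) :
    ∀ x : Fin n, x.1 ≤ m → g x = x := by
  have p0 : (0 : ℕ) < n := by omega
  have h0 : g ⟨0, p0⟩ = ⟨0, p0⟩ := by
    have h1 := h 1 le_rfl (by omega) ⟨0, by omega⟩ (by simp)
    have h2 := h 2 (by omega) hm2 ⟨0, by omega⟩ (by simp)
    simp only [Finset.mem_insert, Finset.mem_singleton] at h1 h2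
    have e1 : (⟨0, by omega⟩ : Fin n) = ⟨0, p0⟩ := rfl
    rw [e1] at h1 h2
    rcases h1 with h1 | h1
    · exact h1
    · rcases h2 with h2 | h2
      · exact h2
      · rw [h1] at h2
        have := congrArg Fin.val h2
        simp only [Fin.val_mk] at this
        omega
  intro x hx
  rcases Nat.eq_zero_or_pos x.1 with hx0 | hx0
  · have hxe : x = ⟨0, p0⟩ := Fin.ext hx0
    rw [hxe]; exact h0
  · have hmem : x ∈ ({⟨0, by omega⟩, ⟨x.1, x.2⟩} : Finset (Fin n)) :=
      Finset.mem_insert_of_mem (Finset.mem_singleton_self x)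
    have hk := h x.1 hx0 hx x hmem
    simp only [Finset.mem_insert, Finset.mem_singleton] at hk
    rcases hk with hk | hk
    · exfalso
      have e1 : (⟨0, by omega⟩ : Fin n) = ⟨0, p0⟩ := rfl
      rw [e1] at hk
      have he : g x = g ⟨0, p0⟩ := by rw [h0, hk]
      have hx0' := congrArg Fin.val (g.injective he)
      simp only [Fin.val_mk] at hx0'
      omega
    · exact hk

lemma perm_eq_one (hn : 5 ≤ n) (g : Equiv.Perm (Fin n))
    (h : ∀ x : Fin n, x.1 < n - 1 → g x = x) : g = 1 := by
  have p1 : n - 1 < n := by omega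
  have hlast : g ⟨n - 1, p1⟩ = ⟨n - 1, p1⟩ := by
    by_contra hne
    have hlt : (g ⟨n - 1, p1⟩).1 < n - 1 := by
      have h2 := (g ⟨n - 1, p1⟩).2
      rcases Nat.lt_or_ge (g ⟨n - 1, p1⟩).1 (n - 1) with h' | h'
      · exact h'
      · exact absurd (Fin.ext (show (g ⟨n - 1, p1⟩).1 = n - 1 by omega)) hne
    exact hne (g.injective (h _ hlt))
  ext x
  rcases Nat.lt_or_ge x.1 (n - 1) with hx | hx
  · simp [h x hx]
  · have hxe : x = ⟨n - 1, p1⟩ := Fin.ext (show x.1 = n - 1 by have := x.2; omega)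
    rw [hxe]; simp [hlast]

lemma perm_dichotomy (hn : 5 ≤ n) (g : Equiv.Perm (Fin n))
    (h : ∀ x : Fin n, x.1 < n - 2 → g x = x) :
    g = 1 ∨ g = Equiv.swap ⟨n - 2, by omega⟩ ⟨n - 1, by omega⟩ := by
  have p1 : n - 1 < n := by omega
  have p2 : n - 2 < n := by omega
  have hbig : ∀ x : Fin n, n - 2 ≤ x.1 → n - 2 ≤ (g x).1 := by
    intro x hx
    by_contra hlt
    push_neg at hlt
    have he := g.injective (h (g x) hlt)
    rw [he] at hlt
    omega
  have h2 := hbig ⟨n - 2, p2⟩ (by simp)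
  rcases Nat.lt_or_ge (g ⟨n - 2, p2⟩).1 (n - 1) with hc | hc
  · have hg2 : g ⟨n - 2, p2⟩ = ⟨n - 2, p2⟩ :=
      Fin.ext (show (g ⟨n - 2, p2⟩).1 = n - 2 by omega)
    left
    apply perm_eq_one hn
    intro x hx
    rcases Nat.lt_or_ge x.1 (n - 2) with hx2 | hx2
    · exact h x hx2
    · have hxe : x = ⟨n - 2, p2⟩ := Fin.ext (show x.1 = n - 2 by omega)
      rw [hxe]; exact hg2
  · have hg2 : g ⟨n - 2, p2⟩ = ⟨n - 1, p1⟩ :=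
      Fin.ext (show (g ⟨n - 2, p2⟩).1 = n - 1 by
        have := (g ⟨n - 2, p2⟩).2; omega)
    have h3 := hbig ⟨n - 1, p1⟩ (by simp only [Fin.val_mk]; omega)
    have hg3 : g ⟨n - 1, p1⟩ = ⟨n - 2, p2⟩ := by
      have hne : (g ⟨n - 1, p1⟩).1 ≠ n - 1 := by
        intro he
        have heq : g ⟨n - 1, p1⟩ = g ⟨n - 2, p2⟩ := by
          rw [hg2]; exact Fin.ext he
        have := congrArg Fin.val (g.injective heq)
        simp only [Fin.val_mk] at this
        omega
      have h4 := (g ⟨n - 1, p1⟩).2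
      exact Fin.ext (show (g ⟨n - 1, p1⟩).1 = n - 2 by omega)
    right
    have es1 : (⟨n - 2, by omega⟩ : Fin n) = ⟨n - 2, p2⟩ := rfl
    have es2 : (⟨n - 1, by omega⟩ : Fin n) = ⟨n - 1, p1⟩ := rfl
    rw [es1, es2]
    ext x
    rcases Nat.lt_or_ge x.1 (n - 2) with hx | hx
    · rw [h x hx, Equiv.swap_apply_of_ne_of_ne]
      · intro he; have := congrArg Fin.val he; simp only [Fin.val_mk] at this; omega
      · intro he; have := congrArg Fin.val he; simp only [Fin.val_mk] at this; omega
    · rcases Nat.lt_or_ge x.1 (n - 1) with hx1 | hx1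
      · have hxe : x = ⟨n - 2, p2⟩ := Fin.ext (show x.1 = n - 2 by omega)
        rw [hxe, hg2, Equiv.swap_apply_left]
      · have hxe : x = ⟨n - 1, p1⟩ := Fin.ext (show x.1 = n - 1 by have := x.2; omega)
        rw [hxe, hg3, Equiv.swap_apply_right]

/-- The list of pairs `{0,1},…,{0,m}`. -/
def L (n : ℕ) (hn : 5 ≤ n) (m : ℕ) (hm : m ≤ n - 2) : List (Finset (Fin n)) :=
  (List.finRange m).map (fun i =>
    ({⟨0, by omega⟩, ⟨i.1 + 1, by have := i.2; omega⟩} : Finset (Fin n)))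

lemma length_L (hn : 5 ≤ n) (m : ℕ) (hm : m ≤ n - 2) : (L n hn m hm).length = m := by
  simp [L]

lemma mem_L (hn : 5 ≤ n) (m : ℕ) (hm : m ≤ n - 2) (s : Finset (Fin n)) :
    s ∈ L n hn m hm ↔ ∃ (j : ℕ) (_ : j < m),
      s = ({⟨0, by omega⟩, ⟨j + 1, by omega⟩} : Finset (Fin n)) := by
  simp only [L, List.mem_map, List.mem_finRange]
  constructor
  · rintro ⟨i, -, rfl⟩
    exact ⟨i.1, i.2, rfl⟩
  · rintro ⟨j, hj, rfl⟩
    exact ⟨⟨j, hj⟩, trivial, rfl⟩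

lemma get_L (hn : 5 ≤ n) (m : ℕ) (hm : m ≤ n - 2) (i : ℕ) (him : i < m)
    (h : i < (L n hn m hm).length) :
    (L n hn m hm).get ⟨i, h⟩ =
      ({⟨0, by omega⟩, ⟨i + 1, by omega⟩} : Finset (Fin n)) := by
  simp [L, List.get_eq_getElem, List.getElem_map, List.getElem_finRange]

lemma mem_take_L (hn : 5 ≤ n) (m : ℕ) (hm : m ≤ n - 2) (i : ℕ) (s : Finset (Fin n))
    (hs : s ∈ (L n hn m hm).take i) :
    ∃ (j : ℕ) (_ : j < m) (_ : j < i),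
      s = ({⟨0, by omega⟩, ⟨j + 1, by omega⟩} : Finset (Fin n)) := by
  obtain ⟨j, hj, he⟩ := List.mem_take_iff_getElem.1 hs
  have hjm : j < m := by
    have h' := hj
    simp only [length_L] at h'
    omega
  have hji : j < i := by omega
  refine ⟨j, hjm, hji, ?_⟩
  rw [← he]
  have hg := get_L hn m hm j hjm (by rw [length_L]; omega)
  simp only [List.get_eq_getElem] at hg
  exact hg

/-- Fixing all pairs of `L n hn m hm` is equivalent to fixing `0,…,m` pointwise. -/
lemma fix_L_iff (hn : 5 ≤ n) (m : ℕ) (hm2 : 2 ≤ m) (hm : m ≤ n - 2) (g : Equiv.Perm (Fin n)) :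
    (∀ s ∈ L n hn m hm, g • s = s) ↔ ∀ x : Fin n, x.1 ≤ m → g x = x := by
  constructor
  · intro h
    apply forward hn m hm2 hm
    intro k hk1 hkm x hx
    have hkn : k < n := by omega
    have hke : (⟨k - 1 + 1, by omega⟩ : Fin n) = ⟨k, hkn⟩ :=
      Fin.ext (show k - 1 + 1 = k by omega)
    have hpair : ({⟨0, by omega⟩, ⟨k - 1 + 1, by omega⟩} : Finset (Fin n)) =
        ({⟨0, by omega⟩, ⟨k, hkn⟩} : Finset (Fin n)) := by rw [hke]
    have hmem : ({⟨0, by omega⟩, ⟨k, hkn⟩} : Finset (Fin n)) ∈ L n hn m hm := by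
      rw [mem_L]
      exact ⟨k - 1, by omega, hpair.symm⟩
    have hfix := (smul_fix_iff g _).1 (h _ hmem)
    exact hfix x hx
  · intro h s hs
    obtain ⟨j, hj, rfl⟩ := (mem_L hn m hm s).1 hs
    exact fix_pair g _ _ (h _ (by simp only [Fin.val_mk]; omega))
      (h _ (by simp only [Fin.val_mk]; omega))

lemma card_L (hn : 5 ≤ n) (m : ℕ) (hm : m ≤ n - 2) :
    ∀ s ∈ L n hn m hm, s.card = 2 := by
  intro s hs
  obtain ⟨j, hj, rfl⟩ := (mem_L hn m hm s).1 hs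
  exact Finset.card_pair (Fin.ne_of_val_ne (show (0 : ℕ) ≠ j + 1 by omega))

/-- The swap `(j+1, n-1)` fixes every pair in `(L n hn m hm).take i` for `j ≥ i`. -/
lemma swap_in_ptStab (hn : 5 ≤ n) (m : ℕ) (hm : m ≤ n - 2) (i : ℕ) (b : Fin n)
    (a : Fin n) (hai : i < a.1) (hb : n - 2 < b.1) :
    Equiv.swap a b ∈ ptStab (Equiv.Perm (Fin n)) ((L n hn m hm).take i) := by
  rw [mem_ptStab_iff]
  intro s hs
  obtain ⟨j, hjm, hji, rfl⟩ := mem_take_L hn m hm i s hs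
  refine fix_pair _ _ _ ?_ ?_
  · refine Equiv.swap_apply_of_ne_of_ne ?_ ?_
    · exact Fin.ne_of_val_ne (show (0 : ℕ) ≠ a.1 by omega)
    · exact Fin.ne_of_val_ne (show (0 : ℕ) ≠ b.1 by omega)
  · refine Equiv.swap_apply_of_ne_of_ne ?_ ?_
    · exact Fin.ne_of_val_ne (show j + 1 ≠ a.1 by omega)
    · exact Fin.ne_of_val_ne (show j + 1 ≠ b.1 by omega)

lemma triple_fix (a b c x : Fin n) (hxa : x ≠ a) (hxb : x ≠ b) (hxc : x ≠ c) :
    (Equiv.swap a b * Equiv.swap a c) x = x := by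
  rw [Equiv.Perm.mul_apply, Equiv.swap_apply_of_ne_of_ne hxa hxc,
    Equiv.swap_apply_of_ne_of_ne hxa hxb]

lemma triple_move (a b c : Fin n) (hca : c ≠ a) (hcb : c ≠ b) :
    (Equiv.swap a b * Equiv.swap a c) a = c := by
  rw [Equiv.Perm.mul_apply, Equiv.swap_apply_left,
    Equiv.swap_apply_of_ne_of_ne hca hcb]

end Stmt7Aux

/-- Let `n ≥ 5`.  Writing the points `1,…,n` as `0,…,n-1`, in the action on `2`-subsets the
pointwise stabilizer in `Sym(n)` of `{1,2},{1,3},…,{1,n-2}` is `Sym({n-1,n})` (the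
permutations fixing `1,…,n-2`).  Consequently `Sym(n)` has an irredundant base of
`2`-subsets of cardinality `n-2`, and `Alt(n)` one of cardinality `n-3`. -/
theorem stmt_7 (n : ℕ) (hn : 5 ≤ n) (C : List (Finset (Fin n)))
    (hC : C = (List.finRange (n - 3)).map (fun i =>
      ({⟨0, by omega⟩, ⟨i.1 + 1, by have := i.2; omega⟩} : Finset (Fin n)))) :
    (∀ g : Equiv.Perm (Fin n),
        (∀ s ∈ C, g • s = s) ↔ ∀ x : Fin n, x.1 < n - 2 → g x = x) ∧
    (∃ w : List (Finset (Fin n)), (∀ s ∈ w, s.card = 2) ∧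
      IsIrredundantBase (Equiv.Perm (Fin n)) w ∧ w.length = n - 2) ∧
    (∃ w : List (Finset (Fin n)), (∀ s ∈ w, s.card = 2) ∧
      IsIrredundantBase (alternatingGroup (Fin n)) w ∧ w.length = n - 3) := by
  have hm3 : n - 3 ≤ n - 2 := by omega
  have hCL : C = Stmt7Aux.L n hn (n - 3) hm3 := hC
  refine ⟨?_, ?_, ?_⟩
  · -- part 1
    intro g
    rw [hCL, Stmt7Aux.fix_L_iff hn (n - 3) (by omega) hm3 g]
    constructor
    · intro h x hx; exact h x (by omega)
    · intro h x hx; exact h x (by omega)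
  · -- Sym(n)
    refine ⟨Stmt7Aux.L n hn (n - 2) le_rfl, Stmt7Aux.card_L hn _ _, ⟨?_, ?_⟩,
      Stmt7Aux.length_L hn _ _⟩
    · -- base
      apply (Subgroup.eq_bot_iff_forall _).2
      intro g hg
      have h1 := (Stmt7Aux.mem_ptStab_iff _ g).1 hg
      have h2 := (Stmt7Aux.fix_L_iff hn (n - 2) (by omega) le_rfl g).1 h1
      exact Stmt7Aux.perm_eq_one hn g (fun x hx => h2 x (by omega))
    · -- irredundancy
      intro i h hle
      have hi : i < n - 2 := by
        have h' := h
        rw [Stmt7Aux.length_L] at h'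
        exact h'
      have pa : i + 1 < n := by omega
      have pb : n - 1 < n := by omega
      have hmem := Stmt7Aux.swap_in_ptStab hn (n - 2) le_rfl i ⟨n - 1, pb⟩ ⟨i + 1, pa⟩
        (show i < i + 1 by omega) (show n - 2 < n - 1 by omega)
      have hst := hle hmem
      rw [MulAction.mem_stabilizer_iff, Stmt7Aux.get_L hn (n - 2) le_rfl i hi h] at hst
      refine Stmt7Aux.move_pair _ _ _ ?_ hst
      have e1 : (⟨i + 1, by omega⟩ : Fin n) = ⟨i + 1, pa⟩ := rfl
      rw [e1, Equiv.swap_apply_left]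
      simp only [Finset.mem_insert, Finset.mem_singleton, not_or]
      constructor
      · exact Fin.ne_of_val_ne (show n - 1 ≠ 0 by omega)
      · exact Fin.ne_of_val_ne (show n - 1 ≠ i + 1 by omega)
  · -- Alt(n)
    refine ⟨Stmt7Aux.L n hn (n - 3) hm3, Stmt7Aux.card_L hn _ _, ⟨?_, ?_⟩,
      Stmt7Aux.length_L hn _ _⟩
    · -- base
      apply (Subgroup.eq_bot_iff_forall _).2
      intro g hg
      have h1 := (Stmt7Aux.mem_ptStab_iff _ g).1 hg
      have h1' : ∀ s ∈ Stmt7Aux.L n hn (n - 3) hm3, (↑g : Equiv.Perm (Fin n)) • s = s :=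
        fun s hs => h1 s hs
      have h2 := (Stmt7Aux.fix_L_iff hn (n - 3) (by omega) hm3 ↑g).1 h1'
      rcases Stmt7Aux.perm_dichotomy hn ↑g (fun x hx => h2 x (by omega)) with he | he
      · exact Subtype.ext he
      · exfalso
        have hsign := g.2
        rw [he, Equiv.Perm.mem_alternatingGroup,
          Equiv.Perm.sign_swap (Fin.ne_of_val_ne (show n - 2 ≠ n - 1 by omega))] at hsign
        exact absurd hsign (by decide)
    · -- irredundancy
      intro i h hle
      have hi : i < n - 3 := by
        have h' := h
        rw [Stmt7Aux.length_L] at h'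
        exact h'
      have pa : i + 1 < n := by omega
      have pb : n - 2 < n := by omega
      have pc : n - 1 < n := by omega
      set a : Fin n := ⟨i + 1, pa⟩ with ha
      set b : Fin n := ⟨n - 2, pb⟩ with hb
      set c : Fin n := ⟨n - 1, pc⟩ with hc
      have hab : a ≠ b := Fin.ne_of_val_ne (show i + 1 ≠ n - 2 by omega)
      have hac : a ≠ c := Fin.ne_of_val_ne (show i + 1 ≠ n - 1 by omega)
      have hbc : b ≠ c := Fin.ne_of_val_ne (show n - 2 ≠ n - 1 by omega)
      set τ : Equiv.Perm (Fin n) := Equiv.swap a b * Equiv.swap a c with hτdef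
      have hτ : τ ∈ alternatingGroup (Fin n) := by
        rw [hτdef, Equiv.Perm.mem_alternatingGroup, map_mul,
          Equiv.Perm.sign_swap hab, Equiv.Perm.sign_swap hac]
        decide
      have hmem : (⟨τ, hτ⟩ : alternatingGroup (Fin n)) ∈
          ptStab (alternatingGroup (Fin n)) ((Stmt7Aux.L n hn (n - 3) hm3).take i) := by
        rw [Stmt7Aux.mem_ptStab_iff]
        intro s hs
        obtain ⟨j, hjm, hji, rfl⟩ := Stmt7Aux.mem_take_L hn (n - 3) hm3 i s hs
        show τ • ({⟨0, by omega⟩, ⟨j + 1, by omega⟩} : Finset (Fin n)) =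
          ({⟨0, by omega⟩, ⟨j + 1, by omega⟩} : Finset (Fin n))
        refine Stmt7Aux.fix_pair _ _ _ ?_ ?_
        · exact Stmt7Aux.triple_fix a b c _
            (Fin.ne_of_val_ne (show (0 : ℕ) ≠ i + 1 by omega))
            (Fin.ne_of_val_ne (show (0 : ℕ) ≠ n - 2 by omega))
            (Fin.ne_of_val_ne (show (0 : ℕ) ≠ n - 1 by omega))
        · exact Stmt7Aux.triple_fix a b c _
            (Fin.ne_of_val_ne (show j + 1 ≠ i + 1 by omega))
            (Fin.ne_of_val_ne (show j + 1 ≠ n - 2 by omega))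
            (Fin.ne_of_val_ne (show j + 1 ≠ n - 1 by omega))
      have hst := hle hmem
      rw [MulAction.mem_stabilizer_iff, Stmt7Aux.get_L hn (n - 3) hm3 i hi h] at hst
      have hst' : τ • ({⟨0, by omega⟩, ⟨i + 1, by omega⟩} : Finset (Fin n)) =
          ({⟨0, by omega⟩, ⟨i + 1, by omega⟩} : Finset (Fin n)) := hst
      refine Stmt7Aux.move_pair τ _ _ ?_ hst'
      have e1 : (⟨i + 1, by omega⟩ : Fin n) = a := rfl
      rw [e1, hτdef, Stmt7Aux.triple_move a b c hac.symm hbc.symm]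
      simp only [Finset.mem_insert, Finset.mem_singleton, not_or]
      constructor
      · exact Fin.ne_of_val_ne (show n - 1 ≠ 0 by omega)
      · exact Fin.ne_of_val_ne (show n - 1 ≠ i + 1 by omega)
end

section
/- Let q = 2^p with p prime, and consider in PΓL_2(q) the stabilizer of the decomposition α = {⟨e_1⟩, ⟨e_2⟩} and of β = {⟨e_1⟩, ⟨e_1 + e_2⟩}. This intersection equals the Galois group Gal(F_{2^p}/F_2) and has prime order p. -/
open Pointwise

noncomputable section

/-- The field `𝔽_q` with `q = 2^p`. -/
abbrev Fq (p : ℕ) : Type := GaloisField 2 p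

/-- The vector space `V = 𝔽_q²`. -/
abbrev Vp (p : ℕ) : Type := Fin 2 → Fq p

/-- `SL₂(q)`. -/
abbrev SL2 (p : ℕ) : Type := Matrix.SpecialLinearGroup (Fin 2) (Fq p)

/-- The Galois group `Gal(𝔽_q/𝔽₂)`. -/
abbrev Gal2 (p : ℕ) : Type := Fq p ≃ₐ[ZMod 2] Fq p

/-- Entrywise action of a field automorphism on `SL₂(q)`. -/
def mapSL (p : ℕ) (σ : Gal2 p) : SL2 p →* SL2 p :=
  Matrix.SpecialLinearGroup.map σ.toRingEquiv.toRingHom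

/-- The action of the Galois group on `SL₂(q)` by automorphisms. -/
def phi (p : ℕ) : Gal2 p →* MulAut (SL2 p) where
  toFun σ := MonoidHom.toMulEquiv (mapSL p σ) (mapSL p σ.symm)
    (MonoidHom.ext fun m => Subtype.ext (by
      ext i j
      simp [mapSL, Matrix.SpecialLinearGroup.map]
      exact AlgEquiv.symm_apply_apply σ _))
    (MonoidHom.ext fun m => Subtype.ext (by
      ext i j
      simp [mapSL, Matrix.SpecialLinearGroup.map]
      exact AlgEquiv.apply_symm_apply σ _))
  map_one' := MulEquiv.ext fun m => Subtype.ext (by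
    ext i j
    simp [mapSL, Matrix.SpecialLinearGroup.map]
    rfl)
  map_mul' := fun σ τ => MulEquiv.ext fun m => Subtype.ext (by
    ext i j
    simp [mapSL, Matrix.SpecialLinearGroup.map]
    rfl)

/-- The group `PΓL₂(q)`: for `q = 2^p` even, `PΓL₂(q)` is the semidirect product
`SL₂(q) ⋊ Gal(𝔽_q/𝔽₂)`. -/
abbrev PGL (p : ℕ) : Type := SL2 p ⋊[phi p] Gal2 p

/-- The linear automorphism of `V` given by `v ↦ v ⬝ m⁻¹` on row vectors (so that
`m ↦ slEquiv p m` is a left action by multiplication of row vectors on the right). -/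
def slEquiv (p : ℕ) (m : SL2 p) : Vp p ≃ₗ[Fq p] Vp p :=
  LinearEquiv.ofLinear
    (Matrix.vecMulLinear ((m⁻¹ : SL2 p) : Matrix (Fin 2) (Fin 2) (Fq p)))
    (Matrix.vecMulLinear ((m : SL2 p) : Matrix (Fin 2) (Fin 2) (Fq p)))
    (by
      apply LinearMap.ext; intro v
      simp only [LinearMap.comp_apply, Matrix.vecMulLinear_apply, LinearMap.id_apply,
        Matrix.vecMul_vecMul, ← Matrix.SpecialLinearGroup.coe_mul, mul_inv_cancel,
        Matrix.SpecialLinearGroup.coe_one, Matrix.vecMul_one])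
    (by
      apply LinearMap.ext; intro v
      simp only [LinearMap.comp_apply, Matrix.vecMulLinear_apply, LinearMap.id_apply,
        Matrix.vecMul_vecMul, ← Matrix.SpecialLinearGroup.coe_mul, inv_mul_cancel,
        Matrix.SpecialLinearGroup.coe_one, Matrix.vecMul_one])

/-- The action of `SL₂(q)` on the lattice of subspaces of `V`. -/
def permOfSL (p : ℕ) : SL2 p →* Equiv.Perm (Submodule (Fq p) (Vp p)) where
  toFun m := (Submodule.orderIsoMapComap (slEquiv p m)).toEquiv
  map_one' := by
    apply Equiv.ext; intro W
    apply SetLike.ext; intro x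
    rw [Equiv.Perm.coe_one, id_eq]
    show x ∈ Submodule.orderIsoMapComap (slEquiv p 1) W ↔ x ∈ W
    rw [Submodule.orderIsoMapComap_apply]
    simp [slEquiv, LinearEquiv.ofLinear_apply, Matrix.vecMulLinear_apply, inv_one,
      Matrix.SpecialLinearGroup.coe_one, Matrix.vecMul_one]
  map_mul' := by
    intro m n
    apply Equiv.ext; intro W
    show Submodule.orderIsoMapComap (slEquiv p (m * n)) W
        = Submodule.orderIsoMapComap (slEquiv p m) (Submodule.orderIsoMapComap (slEquiv p n) W)
    apply SetLike.ext; intro x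
    rw [Submodule.orderIsoMapComap_apply, Submodule.orderIsoMapComap_apply,
      Submodule.orderIsoMapComap_apply]
    simp only [Submodule.mem_map, slEquiv, LinearEquiv.ofLinear_apply,
      Matrix.vecMulLinear_apply]
    constructor
    · rintro ⟨y, hy, rfl⟩
      exact ⟨_, ⟨y, hy, rfl⟩, by
        show Matrix.vecMul (Matrix.vecMul y ((n⁻¹ : SL2 p) : Matrix (Fin 2) (Fin 2) (Fq p)))
            ((m⁻¹ : SL2 p) : Matrix (Fin 2) (Fin 2) (Fq p))
          = Matrix.vecMul y (((m * n)⁻¹ : SL2 p) : Matrix (Fin 2) (Fin 2) (Fq p))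
        rw [Matrix.vecMul_vecMul, ← Matrix.SpecialLinearGroup.coe_mul, ← mul_inv_rev]⟩
    · rintro ⟨_, ⟨y, hy, rfl⟩, rfl⟩
      exact ⟨y, hy, by
        show Matrix.vecMul y (((m * n)⁻¹ : SL2 p) : Matrix (Fin 2) (Fin 2) (Fq p))
          = Matrix.vecMul (Matrix.vecMul y ((n⁻¹ : SL2 p) : Matrix (Fin 2) (Fin 2) (Fq p)))
            ((m⁻¹ : SL2 p) : Matrix (Fin 2) (Fin 2) (Fq p))
        rw [Matrix.vecMul_vecMul, ← Matrix.SpecialLinearGroup.coe_mul, mul_inv_rev]⟩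

/-- The image of a subspace of `V` under the semilinear map induced by a field
automorphism (applied componentwise). -/
def galSub (p : ℕ) (σ : Gal2 p) (W : Submodule (Fq p) (Vp p)) : Submodule (Fq p) (Vp p) where
  carrier := (fun v => σ ∘ v) '' W
  add_mem' := by
    rintro _ _ ⟨x, hx, rfl⟩ ⟨y, hy, rfl⟩
    exact ⟨x + y, W.add_mem hx hy, by funext i; simp⟩
  zero_mem' := ⟨0, W.zero_mem, by funext i; simp⟩
  smul_mem' := by
    rintro c _ ⟨x, hx, rfl⟩
    exact ⟨σ.symm c • x, W.smul_mem _ hx, by funext i; simp [map_mul]⟩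

theorem galSub_comp (p : ℕ) (σ τ : Gal2 p) (W : Submodule (Fq p) (Vp p)) :
    galSub p σ (galSub p τ W) = galSub p (τ.trans σ) W := by
  apply SetLike.ext
  intro x
  constructor
  · rintro ⟨_, ⟨v, hv, rfl⟩, rfl⟩
    exact ⟨v, hv, rfl⟩
  · rintro ⟨v, hv, rfl⟩
    exact ⟨τ ∘ v, ⟨v, hv, rfl⟩, rfl⟩

theorem galSub_eq_self (p : ℕ) (τ : Gal2 p) (hτ : ∀ x, τ x = x)
    (W : Submodule (Fq p) (Vp p)) : galSub p τ W = W := by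
  apply SetLike.ext
  intro x
  constructor
  · rintro ⟨v, hv, rfl⟩
    have h : (⇑τ) ∘ v = v := funext fun i => hτ _
    simpa [h] using hv
  · intro hx
    exact ⟨x, hx, funext fun i => hτ _⟩

/-- The action of the Galois group on the lattice of subspaces of `V`. -/
def permOfGal (p : ℕ) : Gal2 p →* Equiv.Perm (Submodule (Fq p) (Vp p)) where
  toFun σ :=
    { toFun := galSub p σ
      invFun := galSub p σ.symm
      left_inv := fun W => by
        rw [galSub_comp]
        exact galSub_eq_self p _ (fun x => σ.symm_apply_apply x) W
      right_inv := fun W => by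
        rw [galSub_comp]
        exact galSub_eq_self p _ (fun x => σ.apply_symm_apply x) W }
  map_one' := Equiv.ext fun W => galSub_eq_self p 1 (fun x => rfl) W
  map_mul' := fun σ τ => Equiv.ext fun W => (galSub_comp p σ τ W).symm

/-- The action of `PΓL₂(q)` on the lattice of subspaces of `V`. -/
theorem sigma_vecMul (p : ℕ) (σ : Gal2 p) (A : Matrix (Fin 2) (Fin 2) (Fq p)) (z : Vp p) :
    (⇑σ) ∘ Matrix.vecMul z A = Matrix.vecMul ((⇑σ) ∘ z) (A.map ⇑σ) := by
  funext j
  simp [Matrix.vecMul, dotProduct, map_sum, map_mul]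

/-- The action of `PΓL₂(q)` on the lattice of subspaces of `V`. -/
def rho (p : ℕ) : PGL p →* Equiv.Perm (Submodule (Fq p) (Vp p)) :=
  SemidirectProduct.lift (permOfSL p) (permOfGal p) (by
    intro σ
    apply MonoidHom.ext; intro m
    apply Equiv.ext; intro W
    have key : ∀ y : Vp p,
        (⇑σ) ∘ ((slEquiv p m) ((⇑σ.symm) ∘ y)) = (slEquiv p ((phi p σ) m)) y := by
      intro y
      show (⇑σ) ∘ Matrix.vecMul ((⇑σ.symm) ∘ y) ((m⁻¹ : SL2 p) : Matrix (Fin 2) (Fin 2) (Fq p))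
          = Matrix.vecMul y ((((phi p σ) m)⁻¹ : SL2 p) : Matrix (Fin 2) (Fin 2) (Fq p))
      rw [sigma_vecMul]
      have h2 : (⇑σ) ∘ (⇑σ.symm) ∘ y = y := funext fun i => σ.apply_symm_apply _
      rw [h2, ← map_inv]
      rfl
    show Submodule.orderIsoMapComap (slEquiv p ((phi p σ) m)) W =
      (permOfGal p σ) ((Submodule.orderIsoMapComap (slEquiv p m)).toEquiv
        (((permOfGal p σ)⁻¹ : Equiv.Perm (Submodule (Fq p) (Vp p))) W))
    apply SetLike.ext; intro x
    constructor
    · intro hx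
      rw [Submodule.orderIsoMapComap_apply, Submodule.mem_map] at hx
      obtain ⟨y, hy, rfl⟩ := hx
      exact ⟨(slEquiv p m) ((⇑σ.symm) ∘ y), ⟨(⇑σ.symm) ∘ y, ⟨y, hy, rfl⟩, rfl⟩, key y⟩
    · rintro ⟨_, ⟨_, ⟨y, hy, rfl⟩, rfl⟩, rfl⟩
      rw [Submodule.orderIsoMapComap_apply, Submodule.mem_map]
      exact ⟨y, hy, (key y).symm⟩)

instance pglSubmoduleAction (p : ℕ) : MulAction (PGL p) (Submodule (Fq p) (Vp p)) :=
  MulAction.compHom _ (rho p)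

instance (p : ℕ) : DecidableEq (Submodule (Fq p) (Vp p)) := Classical.decEq _

/-! An element `g = m ⋊ σ` stabilizing both pairs fixes each of the lines `⟨e₁⟩`, `⟨e₂⟩`,
`⟨e₁ + e₂⟩`, since `⟨e₁⟩` is the only line the two pairs share. The field automorphism `σ`
fixes these lines (they are spanned by vectors with entries in `𝔽₂`), so `m ∈ SL₂(q)` fixes them
too. A matrix fixing three distinct lines of the plane is scalar, and in characteristic `2` the
only scalar of determinant `1` is the identity. Hence `g = σ`, and
`|Gal(𝔽_{2^p}/𝔽₂)| = [𝔽_{2^p} : 𝔽₂] = p`. -/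

open Matrix SemidirectProduct

theorem MulAction.smul_eq_self_of_mem_stabilizer_pairs {G α : Type*} [Group G]
    [MulAction G α] [DecidableEq α] {g : G} {a b c : α} (hab : a ≠ b) (hac : a ≠ c) (hbc : b ≠ c)
    (hgb : g ∈ stabilizer G ({a, b} : Finset α)) (hgc : g ∈ stabilizer G ({a, c} : Finset α)) :
    g • a = a ∧ g • b = b ∧ g • c = c := by
  have smul_mem {s : Finset α} (hs : g • s = s) {x : α} (hx : x ∈ s) : g • x ∈ s :=
    hs ▸ Finset.smul_mem_smul_finset hx
  have ha1 := smul_mem hgb (Finset.mem_insert_self a {b})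
  have ha2 := smul_mem hgc (Finset.mem_insert_self a {c})
  have hb := smul_mem hgb (Finset.mem_insert_of_mem (Finset.mem_singleton_self b))
  have hc := smul_mem hgc (Finset.mem_insert_of_mem (Finset.mem_singleton_self c))
  simp only [Finset.mem_insert, Finset.mem_singleton] at ha1 ha2 hb hc
  have hga : g • a = a := by grind
  refine ⟨hga, ?_, ?_⟩
  · grind [smul_left_cancel_iff]
  · grind [smul_left_cancel_iff]

theorem Submodule.span_singleton_ne_of_apply_eq_zero {R ι : Type*} [Semiring R] {v w : ι → R}
    (i : ι) (hv : v i = 0) (hw : w i ≠ 0) : R ∙ v ≠ R ∙ w := by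
  intro h
  obtain ⟨c, hc⟩ := Submodule.mem_span_singleton.mp (h ▸ Submodule.mem_span_singleton_self w)
  exact hw (by rw [← hc, Pi.smul_apply, hv, smul_zero])

theorem Matrix.eq_scalar_of_vecMul_mem_span {K : Type*} [Semiring K]
    (A : Matrix (Fin 2) (Fin 2) K)
    (h0 : Pi.single 0 1 ᵥ* A ∈ K ∙ Pi.single 0 1) (h1 : Pi.single 1 1 ᵥ* A ∈ K ∙ Pi.single 1 1)
    (h2 : (Pi.single 0 1 + Pi.single 1 1) ᵥ* A ∈ K ∙ (Pi.single 0 1 + Pi.single 1 1)) :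
    A = scalar (Fin 2) (A 0 0) := by
  obtain ⟨a, ha⟩ := Submodule.mem_span_singleton.mp h0
  obtain ⟨b, hb⟩ := Submodule.mem_span_singleton.mp h1
  obtain ⟨c, hc⟩ := Submodule.mem_span_singleton.mp h2
  rw [single_one_vecMul] at ha hb
  rw [add_vecMul, single_one_vecMul, single_one_vecMul] at hc
  have h01 : A 0 1 = 0 := by simpa using (congrFun ha 1).symm
  have h10 : A 1 0 = 0 := by simpa using (congrFun hb 0).symm
  have h11 : A 1 1 = A 0 0 := by
    have hc0 : c = A 0 0 + A 1 0 := by simpa using congrFun hc 0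
    have hc1 : c = A 0 1 + A 1 1 := by simpa using congrFun hc 1
    simpa [h01, h10] using hc1.symm.trans hc0
  ext i j
  fin_cases i <;> fin_cases j <;> simp [h01, h10, h11]

theorem Matrix.SpecialLinearGroup.eq_one_of_coe_eq_scalar {K : Type*} [CommRing K] [CharP K 2]
    [NoZeroDivisors K] (A : SpecialLinearGroup (Fin 2) K) (a : K)
    (hA : (A : Matrix (Fin 2) (Fin 2) K) = scalar (Fin 2) a) : A = 1 := by
  have ha : a ^ 2 = 1 ^ 2 := by
    simpa [hA, det_fin_two, sq] using A.det_coe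
  ext i j
  rw [hA, CharTwo.sq_injective ha]
  rfl

section

variable {p : ℕ}

theorem mem_galSub (σ : Gal2 p) (W : Submodule (Fq p) (Vp p)) (x : Vp p) :
    x ∈ galSub p σ W ↔ ∃ w ∈ W, σ ∘ w = x :=
  Iff.rfl

theorem galSub_span_singleton (σ : Gal2 p) (v : Vp p) :
    galSub p σ (Fq p ∙ v) = Fq p ∙ (σ ∘ v) := by
  ext x
  simp only [mem_galSub, Submodule.mem_span_singleton]
  constructor
  · rintro ⟨_, ⟨c, rfl⟩, rfl⟩
    exact ⟨σ c, by funext i; simp⟩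
  · rintro ⟨c, rfl⟩
    exact ⟨σ.symm c • v, ⟨_, rfl⟩, by funext i; simp⟩

end

namespace PGL

variable {p : ℕ}

theorem inl_smul (m : SL2 p) (W : Submodule (Fq p) (Vp p)) :
    (inl m : PGL p) • W = permOfSL p m W := by
  show rho p (inl m) W = _
  rw [rho, lift_inl]

theorem inr_smul (σ : Gal2 p) (W : Submodule (Fq p) (Vp p)) :
    (inr σ : PGL p) • W = galSub p σ W := by
  show rho p (inr σ) W = _
  rw [rho, lift_inr]
  rfl

theorem inl_smul_span_singleton (m : SL2 p) (v : Vp p) :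
    (inl m : PGL p) • (Fq p ∙ v) =
      Fq p ∙ (v ᵥ* ((m⁻¹ : SL2 p) : Matrix (Fin 2) (Fin 2) (Fq p))) := by
  rw [inl_smul]
  show Submodule.orderIsoMapComap (slEquiv p m) _ = _
  rw [Submodule.orderIsoMapComap_apply, Submodule.map_span, Set.image_singleton]
  rfl

theorem inr_smul_span_singleton (σ : Gal2 p) {v : Vp p} (hv : ∀ i, v i = 0 ∨ v i = 1) :
    (inr σ : PGL p) • (Fq p ∙ v) = Fq p ∙ v := by
  have hσv : ⇑σ ∘ v = v := funext fun i => by rcases hv i with h | h <;> simp [h]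
  rw [inr_smul, galSub_span_singleton, hσv]

theorem mem_range_inr_of_smul_lines_eq (g : PGL p)
    (h0 : g • (Fq p ∙ (Pi.single 0 1 : Vp p)) = Fq p ∙ Pi.single 0 1)
    (h1 : g • (Fq p ∙ (Pi.single 1 1 : Vp p)) = Fq p ∙ Pi.single 1 1)
    (h2 : g • (Fq p ∙ ((Pi.single 0 1 : Vp p) + Pi.single 1 1)) =
      Fq p ∙ (Pi.single 0 1 + Pi.single 1 1)) :
    g ∈ (inr : Gal2 p →* PGL p).range := by
  have left_mem {v : Vp p} (hv : ∀ i, v i = 0 ∨ v i = 1) (hg : g • (Fq p ∙ v) = Fq p ∙ v) :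
      v ᵥ* ((g.left⁻¹ : SL2 p) : Matrix (Fin 2) (Fin 2) (Fq p)) ∈ Fq p ∙ v := by
    rw [← inl_left_mul_inr_right g, mul_smul, inr_smul_span_singleton _ hv,
      inl_smul_span_singleton] at hg
    exact (Submodule.span_singleton_le_iff_mem _ _).mp hg.le
  have hleft : g.left⁻¹ = 1 := SpecialLinearGroup.eq_one_of_coe_eq_scalar _ _ <|
    eq_scalar_of_vecMul_mem_span _ (left_mem (by simp [Fin.forall_fin_two]) h0)
      (left_mem (by simp [Fin.forall_fin_two]) h1)
      (left_mem (by simp [Fin.forall_fin_two]) h2)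
  exact ⟨g.right, by simpa [inv_eq_one.mp hleft] using inl_left_mul_inr_right g⟩

theorem stabilizer_pairs_inf_eq_range_inr :
    MulAction.stabilizer (PGL p)
        ({Fq p ∙ Pi.single 0 1, Fq p ∙ Pi.single 1 1} : Finset (Submodule (Fq p) (Vp p))) ⊓
      MulAction.stabilizer (PGL p)
        ({Fq p ∙ Pi.single 0 1, Fq p ∙ ((Pi.single 0 1 : Vp p) + Pi.single 1 1)} :
          Finset (Submodule (Fq p) (Vp p))) =
      (inr : Gal2 p →* PGL p).range := by
  ext g
  constructor
  · rintro ⟨h01, h02⟩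
    obtain ⟨h0, h1, h2⟩ := MulAction.smul_eq_self_of_mem_stabilizer_pairs
      (Submodule.span_singleton_ne_of_apply_eq_zero 1 (by simp) (by simp))
      (Submodule.span_singleton_ne_of_apply_eq_zero 1 (by simp) (by simp))
      (Submodule.span_singleton_ne_of_apply_eq_zero 0 (by simp) (by simp)) h01 h02
    exact mem_range_inr_of_smul_lines_eq g h0 h1 h2
  · rintro ⟨σ, rfl⟩
    simp [MulAction.mem_stabilizer_iff, Finset.smul_finset_insert, inr_smul_span_singleton,
      Fin.forall_fin_two]

theorem card_range_inr (hp : p ≠ 0) : Nat.card (inr : Gal2 p →* PGL p).range = p := by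
  rw [Nat.card_congr (MonoidHom.ofInjective inr_injective).toEquiv.symm,
    IsGalois.card_aut_eq_finrank, GaloisField.finrank 2 hp]

end PGL

/-- Let `q = 2^p`, `p` prime, and let `PΓL₂(q)` act on unordered pairs of distinct
`1`-dimensional subspaces of `V = 𝔽_q²`.  The intersection of the stabilizers of
`α = {⟨e₁⟩, ⟨e₂⟩}` and `β = {⟨e₁⟩, ⟨e₁ + e₂⟩}` is exactly the Galois group
`Gal(𝔽_{2^p}/𝔽₂)` (the factor `inr (Gal)` of the semidirect product), of prime order `p`. -/
theorem stmt_15 (p : ℕ) [Fact p.Prime] :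
    MulAction.stabilizer (PGL p)
        ({Submodule.span (Fq p) {Pi.single 0 1}, Submodule.span (Fq p) {Pi.single 1 1}} :
          Finset (Submodule (Fq p) (Vp p))) ⊓
      MulAction.stabilizer (PGL p)
        ({Submodule.span (Fq p) {Pi.single 0 1},
          Submodule.span (Fq p) {(Pi.single 0 1 : Vp p) + Pi.single 1 1}} :
          Finset (Submodule (Fq p) (Vp p))) =
      (SemidirectProduct.inr : Gal2 p →* PGL p).range ∧
    Nat.card ↥(MulAction.stabilizer (PGL p)
        ({Submodule.span (Fq p) {Pi.single 0 1}, Submodule.span (Fq p) {Pi.single 1 1}} :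
          Finset (Submodule (Fq p) (Vp p))) ⊓
      MulAction.stabilizer (PGL p)
        ({Submodule.span (Fq p) {Pi.single 0 1},
          Submodule.span (Fq p) {(Pi.single 0 1 : Vp p) + Pi.single 1 1}} :
          Finset (Submodule (Fq p) (Vp p)))) = p := by
  rw [PGL.stabilizer_pairs_inf_eq_range_inr]
  exact ⟨rfl, PGL.card_range_inr (Fact.out : p.Prime).ne_zero⟩

end
end
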